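/- For all integers n and k with n ≥ k+1, the unsigned Stirling number of the first kind satisfies c(n, n−k) = Σ_{j=0}^{k} c≥2(k+j, j) · C(n, k+j), where C(n,m) denotes the binomial coefficient. -/

import Mathlib

/-!
A permutation of `n + 1` points arises from one of `n` points by adding the point `0` either as
a new fixed point or in front of one of the other `n` points. The second kind of insertion keeps
the number of cycles, because multiplying by a transposition `swap a (g a)` splits exactly one
cycle; this is the recurrence of `stirling1`, so `c(n, c)` counts permutations of `n` points
with `c` cycles (fixed points included).

A permutation of `n` points with `n - k` cycles is the same as its support, an `m`-subset, and
the derangement it induces there, which has `(n - k) - (n - m) = m - k` cycles. Writing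
`m = k + j`, this gives `c(n, n - k) = ∑ⱼ C(n, k + j) · c≥2(k + j, j)`; the range `j ≤ k` comes
from the fact that every cycle of a derangement has length at least two.
-/

/-- Unsigned Stirling numbers of the first kind, defined by the standard recurrence:
`c(0,0) = 1`, `c(n,0) = 0` for `n ≥ 1`, `c(0,k) = 0` for `k ≥ 1`, and
`c(n+1,k+1) = c(n,k) + n * c(n,k+1)`. -/
def stirling1 : ℕ → ℕ → ℕ
  | 0, 0 => 1
  | 0, _ + 1 => 0
  | _ + 1, 0 => 0
  | n + 1, k + 1 => stirling1 n k + n * stirling1 n (k + 1)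

/-- The number of cycles (orbits) of a permutation. -/
noncomputable def cycleCount {n : ℕ} (σ : Equiv.Perm (Fin n)) : ℕ :=
  Nat.card (Quotient (Equiv.Perm.SameCycle.setoid σ))

/-- The associated Stirling number of the first kind `c≥2(n, k)`: the number of
permutations of an `n`-element set with exactly `k` cycles and no fixed points. -/
noncomputable def stirling1Assoc (n k : ℕ) : ℕ :=
  Nat.card {σ : Equiv.Perm (Fin n) // cycleCount σ = k ∧ ∀ x, σ x ≠ x}

open Equiv Finset

theorem Nat.card_subtype_eq_sum_boole {ι : Type*} [Fintype ι] (P : ι → Prop)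
    [DecidablePred P] :
    Nat.card {i // P i} = ∑ i, if P i then 1 else 0 := by
  rw [sum_boole, Nat.card_eq_fintype_card, Fintype.card_subtype, Nat.cast_id]

namespace Equiv.Perm

variable {α β : Type*}

-- `cycleCount` on an arbitrary type, so that it applies to permutations of a subset.
noncomputable def numCycles (σ : Perm α) : ℕ :=
  Nat.card (Quotient (SameCycle.setoid σ))

theorem sameCycle_permCongr (e : α ≃ β) {σ : Perm α} {x y : α} :
    SameCycle (e.permCongr σ) (e x) (e y) ↔ SameCycle σ x y := by
  have hpow (i : ℤ) : (e.permCongr σ ^ i) (e x) = e ((σ ^ i) x) := by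
    rw [← permCongrHom_coe, ← map_zpow, permCongrHom_coe, permCongr_apply, symm_apply_apply]
  exact exists_congr fun i => by rw [hpow, e.apply_eq_iff_eq]

theorem numCycles_permCongr (e : α ≃ β) (σ : Perm α) :
    numCycles (e.permCongr σ) = numCycles σ :=
  (Nat.card_congr (Quotient.congr e fun _ _ => (sameCycle_permCongr e).symm)).symm

theorem permCongr_mem_derangements_iff (e : α ≃ β) {σ : Perm α} :
    e.permCongr σ ∈ derangements β ↔ σ ∈ derangements α := by
  simp only [derangements, Set.mem_ofPred_eq, permCongr_apply, ne_eq, ← e.eq_symm_apply]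
  exact e.symm.forall_congr_right (q := fun a => ¬σ a = a)

theorem card_numCycles_derangements_congr (e : α ≃ β) (P : ℕ → Prop) :
    Nat.card {σ : Perm α // P (numCycles σ) ∧ σ ∈ derangements α} =
      Nat.card {σ : Perm β // P (numCycles σ) ∧ σ ∈ derangements β} :=
  Nat.card_congr <| e.permCongr.subtypeEquiv fun σ => by
    rw [numCycles_permCongr, permCongr_mem_derangements_iff]

theorem numCycles_pos [Finite α] [Nonempty α] (σ : Perm α) : 0 < numCycles σ :=
  have : Nonempty (Quotient (SameCycle.setoid σ)) := .map (Quotient.mk _) ‹_›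
  Nat.card_pos

section Fintype

variable [Fintype α] [DecidableEq α]

def cycleFactorOrFixedPoint (σ : Perm α) (x : α) :
    σ.cycleFactorsFinset ⊕ {x // x ∉ σ.support} :=
  if hx : x ∈ σ.support then .inl ⟨σ.cycleOf x, cycleOf_mem_cycleFactorsFinset_iff.2 hx⟩
  else .inr ⟨x, hx⟩

theorem cycleFactorOrFixedPoint_eq_iff (σ : Perm α) (x y : α) :
    cycleFactorOrFixedPoint σ x = cycleFactorOrFixedPoint σ y ↔ σ.SameCycle x y := by
  unfold cycleFactorOrFixedPoint
  by_cases hx : x ∈ σ.support <;> by_cases hy : y ∈ σ.support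
  · simp [hx, hy, sameCycle_iff_cycleOf_eq_of_mem_support hx hy]
  · simpa [hx, hy] using fun h => hy (h.mem_support_iff.1 hx)
  · simpa [hx, hy] using fun h => hx (h.mem_support_iff.2 hy)
  · simp only [hx, hy, dite_false, Sum.inr.injEq, Subtype.mk.injEq]
    exact ⟨fun h => h ▸ SameCycle.refl _ _, fun h => h.eq_of_left (notMem_support.1 hx)⟩

theorem cycleFactorOrFixedPoint_surjective (σ : Perm α) :
    Function.Surjective (cycleFactorOrFixedPoint σ) := by
  rintro (⟨c, hc⟩ | ⟨x, hx⟩)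
  · obtain ⟨x, hx, -⟩ := (mem_cycleFactorsFinset_iff.1 hc).1
    have hxc : x ∈ c.support := mem_support.2 hx
    refine ⟨x, ?_⟩
    simp [cycleFactorOrFixedPoint, mem_cycleFactorsFinset_support_le hc hxc,
      cycle_is_cycleOf hxc hc]
  · exact ⟨x, by simp [cycleFactorOrFixedPoint, hx]⟩

theorem numCycles_eq (σ : Perm α) :
    numCycles σ = Multiset.card σ.cycleType + (Fintype.card α - #σ.support) := by
  have e : Quotient (SameCycle.setoid σ) ≃ σ.cycleFactorsFinset ⊕ {x // x ∉ σ.support} :=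
    (Quotient.congrRight fun x y => (cycleFactorOrFixedPoint_eq_iff σ x y).symm).trans
      (Setoid.quotientKerEquivOfSurjective _ (cycleFactorOrFixedPoint_surjective σ))
  rw [numCycles, Nat.card_congr e, Nat.card_sum, Nat.card_eq_fintype_card,
    Nat.card_eq_fintype_card, Fintype.card_coe, Fintype.card_subtype_compl, Fintype.card_coe,
    cycleType_def, Multiset.card_map]
  rfl

theorem numCycles_one : numCycles (1 : Perm α) = Fintype.card α := by
  simp [numCycles_eq]

theorem IsCycle.numCycles_eq {c : Perm α} (hc : c.IsCycle) :
    numCycles c = 1 + (Fintype.card α - #c.support) := by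
  rw [Perm.numCycles_eq, hc.cycleType, Multiset.card_singleton]

theorem Disjoint.numCycles_mul_add_card {σ τ : Perm α} (h : Disjoint σ τ) :
    numCycles (σ * τ) + Fintype.card α = numCycles σ + numCycles τ := by
  have hle : #σ.support + #τ.support ≤ Fintype.card α :=
    h.card_support_mul ▸ card_le_univ _
  simp only [numCycles_eq, h.cycleType_mul, h.card_support_mul, Multiset.card_add]
  omega

theorem IsCycle.numCycles_swap_mul {c : Perm α} (hc : c.IsCycle) {a : α} (ha : c a ≠ a) :
    numCycles (swap a (c a) * c) = numCycles c + 1 := by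
  have hac : a ∈ c.support := mem_support.2 ha
  have h2 := hc.two_le_card_support
  have hN := card_le_univ c.support
  by_cases hca : c (c a) = a
  · have hsw : c = swap a (c a) := hc.eq_swap_of_apply_apply_eq_self ha hca
    have hcard : #c.support = 2 := by rw [hsw]; exact card_support_swap (Ne.symm ha)
    have hone : swap a (c a) * c = 1 := (congrArg (swap a (c a) * ·) hsw).trans (swap_mul_self _ _)
    rw [hc.numCycles_eq, hcard, hone, numCycles_one]
    omega
  · rw [(hc.swap_mul ha hca).numCycles_eq, hc.numCycles_eq, support_swap_mul_eq c a hca,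
      card_sdiff_of_subset (singleton_subset_iff.2 hac), card_singleton]
    omega

theorem numCycles_swap_mul {g : Perm α} {a : α} (ha : g a ≠ a) :
    numCycles (swap a (g a) * g) = numCycles g + 1 := by
  -- `g = c * (g * c⁻¹)` with `c` the cycle of `a`, disjoint from the rest; the swap splits `c`.
  set c := g.cycleOf a
  have hc : c ∈ g.cycleFactorsFinset :=
    cycleOf_mem_cycleFactorsFinset_iff.2 (mem_support.2 ha)
  have hdisj : Disjoint (g * c⁻¹) c := disjoint_mul_inv_of_mem_cycleFactorsFinset hc
  have hg : g = c * (g * c⁻¹) := by rw [← hdisj.commute.eq, inv_mul_cancel_right]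
  have hca : c a = g a := cycleOf_apply_self g a
  have hcyc : c.IsCycle := isCycle_cycleOf g ha
  have hca' : c a ≠ a := hca ▸ ha
  have hswap : Disjoint (swap a (c a)) (g * c⁻¹) := by
    rw [disjoint_iff_disjoint_support, support_swap (Ne.symm hca')]
    refine (disjoint_iff_disjoint_support.1 hdisj).symm.mono_left ?_
    exact insert_subset_iff.2 ⟨mem_support.2 hca',
      singleton_subset_iff.2 (apply_mem_support.2 (mem_support.2 hca'))⟩
  have h₁ := (hswap.mul_left hdisj.symm).numCycles_mul_add_card
  rw [mul_assoc, ← hg, hcyc.numCycles_swap_mul hca', hca] at h₁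
  have h₂ := hdisj.symm.numCycles_mul_add_card
  rw [← hg] at h₂
  omega

theorem numCycles_extendDomain [Fintype β] [DecidableEq β] {p : β → Prop} [DecidablePred p]
    (f : α ≃ Subtype p) (g : Perm α) :
    numCycles (g.extendDomain f) = numCycles g + Fintype.card {b // ¬p b} := by
  have hα : Fintype.card α = Fintype.card {b // p b} := Fintype.card_congr f
  have hβ := Fintype.card_subtype_le p
  have hg := card_le_univ g.support
  rw [numCycles_eq, numCycles_eq, cycleType_extendDomain, card_support_extend_domain,
    Fintype.card_subtype_compl]
  omega

theorem numCycles_ofSubtype [Fintype β] [DecidableEq β] {p : β → Prop} [DecidablePred p]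
    (g : Perm (Subtype p)) :
    numCycles (ofSubtype g) = numCycles g + Fintype.card {b // ¬p b} :=
  numCycles_extendDomain (Equiv.refl _) g

theorem two_mul_numCycles_le_card {σ : Perm α} (hσ : σ ∈ derangements α) :
    2 * numCycles σ ≤ Fintype.card α := by
  have hsupp : σ.support = univ := eq_univ_of_forall fun x => mem_support.2 (hσ x)
  have h2 : Multiset.card σ.cycleType • 2 ≤ σ.cycleType.sum :=
    Multiset.card_nsmul_le_sum fun _ => two_le_of_mem_cycleType
  rw [sum_cycleType, hsupp, card_univ, smul_eq_mul] at h2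
  rw [numCycles_eq, hsupp, card_univ, Nat.sub_self, add_zero]
  omega

theorem card_numCycles_support_eq (s : Finset α) (c : ℕ) :
    Nat.card {σ : Perm α // numCycles σ = c ∧ σ.support = s} =
      Nat.card {τ : Perm s //
        numCycles τ + (Fintype.card α - #s) = c ∧ τ ∈ derangements s} := by
  have hcard : Fintype.card {a // a ∉ s} = Fintype.card α - #s := by
    simp [Fintype.card_subtype_compl]
  have hsupp (σ : Perm α) :
      σ.support = s ↔ ∀ a, a ∉ s ↔ a ∈ Function.fixedPoints σ := by
    simp [Finset.ext_iff, Function.IsFixedPt, not_iff_comm]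
  symm
  calc Nat.card {τ : Perm s // numCycles τ + (Fintype.card α - #s) = c ∧ τ ∈ derangements s}
      = Nat.card {τ : derangements s // numCycles τ.1 + (Fintype.card α - #s) = c} :=
        Nat.card_congr ((subtypeEquivRight fun _ => and_comm).trans
          (subtypeSubtypeEquivSubtypeInter _ _).symm)
    _ = Nat.card {σ : {σ : Perm α // ∀ a, a ∉ s ↔ a ∈ Function.fixedPoints σ} //
          numCycles σ.1 = c} :=
        Nat.card_congr <| (derangements.subtypeEquiv (· ∈ s)).subtypeEquiv fun τ => by
          rw [← hcard, ← numCycles_ofSubtype]; rfl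
    _ = Nat.card {σ : Perm α // numCycles σ = c ∧ σ.support = s} :=
        Nat.card_congr <| (subtypeSubtypeEquivSubtypeInter
          (fun σ : Perm α => ∀ a, a ∉ s ↔ a ∈ Function.fixedPoints σ) (numCycles · = c)).trans
          (subtypeEquivRight fun σ => by rw [hsupp, and_comm])

theorem card_numCycles_eq_sum_choose_mul (c : ℕ) :
    Nat.card {σ : Perm α // numCycles σ = c} =
      ∑ m ∈ range (Fintype.card α + 1), (Fintype.card α).choose m *
        Nat.card {τ : Perm (Fin m) //
          numCycles τ + (Fintype.card α - m) = c ∧ τ ∈ derangements (Fin m)} := by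
  calc Nat.card {σ : Perm α // numCycles σ = c}
      = ∑ s : Finset α, Nat.card {σ : Perm α // numCycles σ = c ∧ σ.support = s} := by
        rw [← Nat.card_congr (sigmaFiberEquiv fun σ : {σ // numCycles σ = c} => σ.1.support),
          Nat.card_sigma]
        exact sum_congr rfl fun s _ =>
          Nat.card_congr (subtypeSubtypeEquivSubtypeInter (numCycles · = c) (·.support = s))
    _ = ∑ s : Finset α, Nat.card {τ : Perm (Fin #s) //
          numCycles τ + (Fintype.card α - #s) = c ∧ τ ∈ derangements (Fin #s)} :=
        sum_congr rfl fun s _ => by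
          rw [card_numCycles_support_eq,
            card_numCycles_derangements_congr s.equivFin (· + (Fintype.card α - #s) = c)]
    _ = _ := by
        rw [← powerset_univ, sum_powerset_apply_card fun m => Nat.card {τ : Perm (Fin m) //
          numCycles τ + (Fintype.card α - m) = c ∧ τ ∈ derangements (Fin m)}, card_univ]
        simp only [smul_eq_mul]

end Fintype

theorem swap_mul_decomposeFin_symm {n : ℕ} (p : Fin (n + 1)) (e : Perm (Fin n)) :
    swap 0 p * decomposeFin.symm (p, e) = decomposeFin.symm (0, e) := by
  ext x
  refine Fin.cases ?_ (fun y => ?_) x <;> simp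

theorem decomposeFin_symm_zero {n : ℕ} (e : Perm (Fin n)) :
    decomposeFin.symm (0, e) = e.extendDomain (finSuccAboveEquiv 0) := by
  ext x
  refine Fin.cases ?_ (fun y => ?_) x
  · rw [decomposeFin_symm_apply_zero, extendDomain_apply_not_subtype _ _ (by simp)]
  · have hy : y.succ = (finSuccAboveEquiv 0 y : Fin (n + 1)) := by simp [finSuccAboveEquiv_apply]
    rw [decomposeFin_symm_apply_succ, hy, extendDomain_apply_image]
    simp [finSuccAboveEquiv_apply]

theorem numCycles_decomposeFin_symm {n : ℕ} (p : Fin (n + 1)) (e : Perm (Fin n)) :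
    numCycles (decomposeFin.symm (p, e)) = numCycles e + if p = 0 then 1 else 0 := by
  have h0 : numCycles (decomposeFin.symm (0, e)) = numCycles e + 1 := by
    rw [decomposeFin_symm_zero, numCycles_extendDomain]
    simp
  split_ifs with hp
  · rw [hp, h0]
  · have h := numCycles_swap_mul (g := decomposeFin.symm (p, e)) (a := 0) (by simpa using hp)
    rw [decomposeFin_symm_apply_zero, swap_mul_decomposeFin_symm, h0] at h
    omega

theorem card_numCycles_eq_stirling1 (n c : ℕ) :
    Nat.card {σ : Perm (Fin n) // numCycles σ = c} = stirling1 n c := by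
  induction n generalizing c with
  | zero =>
    have h (σ : Perm (Fin 0)) : numCycles σ = 0 := by
      rw [Subsingleton.elim σ 1, numCycles_one, Fintype.card_fin]
    cases c <;> simp [h, stirling1]
  | succ n ih =>
    rcases c with _ | c
    · have : IsEmpty {σ : Perm (Fin (n + 1)) // numCycles σ = 0} :=
        ⟨fun σ => (numCycles_pos σ.1).ne' σ.2⟩
      simp [stirling1]
    calc Nat.card {σ : Perm (Fin (n + 1)) // numCycles σ = c + 1}
        = ∑ σ : Perm (Fin (n + 1)), if numCycles σ = c + 1 then 1 else 0 :=
          Nat.card_subtype_eq_sum_boole _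
      _ = ∑ p : Fin (n + 1), ∑ e : Perm (Fin n),
            if numCycles e + (if p = 0 then 1 else 0) = c + 1 then 1 else 0 := by
          rw [← decomposeFin.symm.sum_comp, Fintype.sum_prod_type]
          simp only [numCycles_decomposeFin_symm]
      _ = stirling1 (n + 1) (c + 1) := by
          simp only [Fin.sum_univ_succ, Fin.succ_ne_zero, ↓reduceIte, add_zero,
            Nat.add_right_cancel_iff, ← Nat.card_subtype_eq_sum_boole, ih, sum_const,
            card_univ, Fintype.card_fin, smul_eq_mul, stirling1]

end Equiv.Perm

open Equiv.Perm

theorem cycleCount_eq_numCycles {n : ℕ} (σ : Perm (Fin n)) : cycleCount σ = numCycles σ := rfl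

theorem stirling1Assoc_eq_zero_of_lt {m j : ℕ} (h : m < 2 * j) : stirling1Assoc m j = 0 :=
  have : IsEmpty {σ : Perm (Fin m) // cycleCount σ = j ∧ ∀ x, σ x ≠ x} :=
    ⟨fun σ => by
      have hle := two_mul_numCycles_le_card σ.2.2
      rw [Fintype.card_fin, ← cycleCount_eq_numCycles, σ.2.1] at hle
      omega⟩
  Nat.card_of_isEmpty

/-- For `n ≥ k + 1`, `c(n, n-k) = ∑_{j=0}^{k} c≥2(k+j, j) · C(n, k+j)`. -/
theorem stirling1_eq_sum_stirling1Assoc (n k : ℕ) (h : k + 1 ≤ n) :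
    stirling1 n (n - k) =
      ∑ j ∈ Finset.range (k + 1), stirling1Assoc (k + j) j * n.choose (k + j) := by
  have hsmall (m : ℕ) (hm : m < k) : Nat.card {τ : Perm (Fin m) //
      numCycles τ + (n - m) = n - k ∧ τ ∈ derangements (Fin m)} = 0 :=
    have : IsEmpty {τ : Perm (Fin m) //
      numCycles τ + (n - m) = n - k ∧ τ ∈ derangements (Fin m)} :=
      ⟨fun τ => by have := τ.2.1; omega⟩
    Nat.card_of_isEmpty
  have hlarge (j : ℕ) (hj : k + j ≤ n) : Nat.card {τ : Perm (Fin (k + j)) //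
      numCycles τ + (n - (k + j)) = n - k ∧ τ ∈ derangements (Fin (k + j))} =
        stirling1Assoc (k + j) j :=
    Nat.card_congr <| subtypeEquivRight fun τ =>
      and_congr_left' (by rw [cycleCount_eq_numCycles]; omega)
  rw [← card_numCycles_eq_stirling1, card_numCycles_eq_sum_choose_mul, Fintype.card_fin,
    show n + 1 = k + (n + 1 - k) by omega, sum_range_add,
    sum_eq_zero fun m hm => by rw [hsmall m (mem_range.1 hm), mul_zero], zero_add,
    sum_congr rfl fun j hj => by rw [hlarge j (by simp at hj; omega), mul_comm]]
  have hchoose : ∀ j ≥ n + 1 - k, stirling1Assoc (k + j) j * n.choose (k + j) = 0 :=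
    fun j hj => by rw [Nat.choose_eq_zero_of_lt (by omega), mul_zero]
  have hassoc : ∀ j ≥ k + 1, stirling1Assoc (k + j) j * n.choose (k + j) = 0 :=
    fun j hj => by rw [stirling1Assoc_eq_zero_of_lt (by omega), zero_mul]
  rw [← eventually_constant_sum hchoose (by omega : n + 1 - k ≤ n + 1),
    eventually_constant_sum hassoc (by omega : k + 1 ≤ n + 1)]
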